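/- Let Ψ, Φ and h be as in the canonical construction with d = 1 + rλ + sλ′, and let Υ be a clause minimum prime pure Horn CNF representation of h. Then |Ψ|_c/(λ+λ′) ≤ |Υ|_c − t(κ(f)·r + s) ≤ |Ψ|_c, where f is any tight optimal total-cover of the refined Label Cover instance L and κ(f)·r + s is the total number of labels assigned by f. -/

import Mathlib

/-!
Upper bound: replacing the clauses (e) by the clauses `v(j) → u(ℓ)` for the labels `ℓ` used by
`(f, g)` still represents `h`, because from `v(j)` these labels derive through `Ψ` every variable
that heads a clause of `Φ`; this CNF has at most `|Ψ| + t·K` clauses, `K = κ(f)·r + s`.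

Lower bound: primality forces a clause of `Υ` whose body contains `v(j)` to have body exactly
`{v(j)}`, and no clause of `Υ` has a head `v(j)`. The clauses with `v`-free bodies must have
every head variable of `Φ` among their heads, and there are at least `|Ψ|/(λ+λ′)` of those.
For each `j`, the heads `H_j` of the clauses with body `v(j)` derive every `u(ℓ)` through `Ψ`.
As `d > |L ∪ L′| ≥ K`, either `|H_j| ≥ d`, or some level `i₀ ∈ [d]` is missed by `H_j`; then
the only way to derive `e(x,y,i₀)` is through labels in `H_j` covering all edges at `y`, so the
`u`-variables in `H_j` contain a tight total cover and `|H_j| ≥ K` by optimality.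
-/

open Finset

/-- A clause, given by its (fin)sets of positive and negative variables. -/
structure Clause (V : Type*) where
  pos : Finset V
  neg : Finset V
deriving DecidableEq

namespace Clause

variable {V : Type*}

/-- A genuine clause: no variable occurs both positively and negatively. -/
def IsClause (C : Clause V) : Prop := Disjoint C.pos C.neg

/-- Evaluation of a clause (as a disjunction of literals) under an assignment. -/
def eval (C : Clause V) (a : V → Bool) : Prop :=
  (∃ v ∈ C.pos, a v = true) ∨ (∃ v ∈ C.neg, a v = false)

/-- A pure (definite) Horn clause: exactly one positive literal, its head. -/
def IsPureHorn (C : Clause V) : Prop := ∃ v, C.pos = {v}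

end Clause

variable {V : Type*}

/-- Conjunction (as a predicate on assignments) of a set of clauses. -/
def evalSet (S : Set (Clause V)) (a : V → Bool) : Prop := ∀ C ∈ S, C.eval a

/-- Conjunction of the clauses of a CNF, i.e. of a finite set of clauses. -/
def evalCNF (Φ : Finset (Clause V)) (a : V → Bool) : Prop := ∀ C ∈ Φ, C.eval a

/-- A CNF represents a Boolean function `h`. -/
def Represents (Φ : Finset (Clause V)) (h : (V → Bool) → Prop) : Prop :=
  ∀ a, evalCNF Φ a ↔ h a

/-- A pure Horn CNF: all clauses are pure Horn. -/
def IsPureHornCNF (Φ : Finset (Clause V)) : Prop :=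
  ∀ C ∈ Φ, C.IsClause ∧ C.IsPureHorn

/-- The forward chaining closure of a set `Q` of variables with respect to the
pure Horn CNF `Φ`: the smallest set containing `Q` such that whenever `Φ` contains
a clause `S → v` with `S` inside the set, also `v` belongs to it. -/
def fcClosure (Φ : Finset (Clause V)) (Q : Set V) : Set V :=
  ⋂₀ {T : Set V | Q ⊆ T ∧ ∀ C ∈ Φ, ∀ v : V, C.pos = {v} → ↑C.neg ⊆ T → v ∈ T}

/-- `C` is an implicate of `h`: every assignment falsifying `C` falsifies `h`. -/
def Implicate (h : (V → Bool) → Prop) (C : Clause V) : Prop :=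
  ∀ a, ¬ C.eval a → ¬ h a

/-- `C` is a prime implicate of `h`: an implicate from which no literal can be
deleted while remaining an implicate. -/
def PrimeImplicate [DecidableEq V] (h : (V → Bool) → Prop) (C : Clause V) : Prop :=
  C.IsClause ∧ Implicate h C ∧
  (∀ v ∈ C.pos, ¬ Implicate h ⟨C.pos.erase v, C.neg⟩) ∧
  (∀ v ∈ C.neg, ¬ Implicate h ⟨C.pos, C.neg.erase v⟩)

/-- `C₁` and `C₂` are resolvable on `v`: `v` occurs positively in `C₁`, negatively in
`C₂`, and no other variable occurs with opposite signs in them. -/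
def Resolvable (C₁ C₂ : Clause V) (v : V) : Prop :=
  v ∈ C₁.pos ∧ v ∈ C₂.neg ∧
  ∀ w, w ≠ v → ¬(w ∈ C₁.pos ∧ w ∈ C₂.neg) ∧ ¬(w ∈ C₁.neg ∧ w ∈ C₂.pos)

/-- The resolvent `R(C₁,C₂) = (C₁ \ {v}) ∪ (C₂ \ {v̄})`. -/
def resolventOf [DecidableEq V] (C₁ C₂ : Clause V) (v : V) : Clause V :=
  ⟨C₁.pos.erase v ∪ C₂.pos, C₁.neg ∪ C₂.neg.erase v⟩

/-- A set of clauses closed under resolution. -/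
def ResClosed [DecidableEq V] (S : Set (Clause V)) : Prop :=
  ∀ C₁ ∈ S, ∀ C₂ ∈ S, ∀ v, Resolvable C₁ C₂ v → resolventOf C₁ C₂ v ∈ S

/-- The resolution closure of a set of clauses. -/
def resClosure [DecidableEq V] (S : Set (Clause V)) : Set (Clause V) :=
  ⋂₀ {T : Set (Clause V) | S ⊆ T ∧ ResClosed T}

/-- `I(h)`: the resolution closure of the set of prime implicates of `h`. -/
def implSet [DecidableEq V] (h : (V → Bool) → Prop) : Set (Clause V) :=
  resClosure {C | PrimeImplicate h C}

/-- An exclusive set of clauses of `h`. -/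
def ExclusiveSet [DecidableEq V] (h : (V → Bool) → Prop) (Xs : Set (Clause V)) : Prop :=
  Xs ⊆ implSet h ∧
  ∀ C₁ ∈ implSet h, ∀ C₂ ∈ implSet h, ∀ v, Resolvable C₁ C₂ v →
    resolventOf C₁ C₂ v ∈ Xs → C₁ ∈ Xs ∧ C₂ ∈ Xs

/-- The set of variables occurring in a CNF. -/
def varsOf [DecidableEq V] (Φ : Finset (Clause V)) : Finset V :=
  Φ.biUnion fun C => C.pos ∪ C.neg


/-- A Label Cover instance: a bipartite graph with parts `X` and `Y` and edge set `E`,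
label sets `A` (for `X`-vertices) and `B` (for `Y`-vertices), and a nonempty
constraint relation `cst e ⊆ A × B` for every edge `e ∈ E`. -/
structure LabelCover (X Y A B : Type*) where
  E : Finset (X × Y)
  cst : X × Y → Finset (A × B)
  cst_nonempty : ∀ e ∈ E, (cst e).Nonempty

namespace LabelCover

variable {X Y A B : Type*}

/-- A labeling `(f, g)` covers an edge `(x,y)` if for every label `b ∈ g y` there is a
label `a ∈ f x` with `(a, b)` admissible for the edge. -/
def Covers (I : LabelCover X Y A B) (f : X → Finset A) (g : Y → Finset B)
    (e : X × Y) : Prop :=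
  ∀ b ∈ g e.2, ∃ a ∈ f e.1, (a, b) ∈ I.cst e

/-- A total-cover: a labeling (assigning a nonempty label set to every `Y`-vertex)
covering every edge. -/
def IsTotalCover (I : LabelCover X Y A B) (f : X → Finset A) (g : Y → Finset B) : Prop :=
  (∀ y, (g y).Nonempty) ∧ ∀ e ∈ I.E, I.Covers f g e

/-- A total-cover is tight if every `Y`-vertex receives exactly one label. -/
def Tight (g : Y → Finset B) : Prop := ∀ y, (g y).card = 1

end LabelCover

/-- The cost of a labeling: the average number of labels assigned to `X`-vertices. -/
def lcCost {X A : Type*} [Fintype X] (f : X → Finset A) : ℚ :=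
  (∑ x, ((f x).card : ℚ)) / (Fintype.card X : ℚ)


/-- The labels of the refined Label Cover instance: `L ∪ L′`, where `L = ⋃_x L_x`
with `L_x = {x} × A` and `L′ = ⋃_y L′_y` with `L′_y = {y} × B`. -/
abbrev Lab (X Y A B : Type*) := (X × A) ⊕ (Y × B)

/-- The propositional variables of the canonical pure Horn CNF construction:
`u ℓ` for labels `ℓ ∈ L ∪ L′`, `e x y i` and `el x y ℓ′ i` for edges `(x,y)`,
labels `ℓ′ ∈ L′_y` and indices `i ∈ [d]`, and `v j` for `j ∈ [t]`. -/
inductive PV (X Y A B : Type*) where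
  | u : Lab X Y A B → PV X Y A B
  | e : X → Y → ℕ → PV X Y A B
  | el : X → Y → B → ℕ → PV X Y A B
  | v : ℕ → PV X Y A B
deriving DecidableEq

section Canonical

variable {X Y A B : Type*} [Fintype X] [Fintype Y] [Fintype A] [Fintype B]
  [DecidableEq X] [DecidableEq Y] [DecidableEq A] [DecidableEq B]

/-- The (open) neighborhood `N(y) = {z ∈ X : (z,y) ∈ E}`. -/
def Nbr (I : LabelCover X Y A B) (y : Y) : Finset X :=
  Finset.univ.filter fun z => (z, y) ∈ I.E

/-- Clauses (a): `u(ℓ) ∧ u(ℓ′) → e(x,y,ℓ′,i)` for `(x,y) ∈ E`, `(ℓ,ℓ′) ∈ Π_{(x,y)}`,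
`i ∈ [d]`. -/
def clA (I : LabelCover X Y A B) (d : ℕ) : Finset (Clause (PV X Y A B)) :=
  (I.E ×ˢ Finset.Icc 1 d).biUnion fun p =>
    (I.cst p.1).image fun ab =>
      ⟨{PV.el p.1.1 p.1.2 ab.2 p.2},
       {PV.u (Sum.inl (p.1.1, ab.1)), PV.u (Sum.inr (p.1.2, ab.2))}⟩

/-- Clauses (b): `⋀_{z ∈ N(y)} e(z,y,ℓ′,i) → e(x,y,i)` for `(x,y) ∈ E`, `ℓ′ ∈ L′_y`,
`i ∈ [d]`. -/
def clB (I : LabelCover X Y A B) (d : ℕ) : Finset (Clause (PV X Y A B)) :=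
  ((I.E ×ˢ (Finset.univ : Finset B)) ×ˢ Finset.Icc 1 d).image fun p =>
    ⟨{PV.e p.1.1.1 p.1.1.2 p.2},
     (Nbr I p.1.1.2).image fun z => PV.el z p.1.1.2 p.1.2 p.2⟩

/-- Clauses (c): `e(x,y,i) → e(x,y,ℓ′,i)` for `(x,y) ∈ E`, `ℓ′ ∈ L′_y`, `i ∈ [d]`. -/
def clC (I : LabelCover X Y A B) (d : ℕ) : Finset (Clause (PV X Y A B)) :=
  ((I.E ×ˢ (Finset.univ : Finset B)) ×ˢ Finset.Icc 1 d).image fun p =>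
    ⟨{PV.el p.1.1.1 p.1.1.2 p.1.2 p.2}, {PV.e p.1.1.1 p.1.1.2 p.2}⟩

/-- The common body of the clauses (d): all variables `e(x,y,i)`, `(x,y) ∈ E`, `i ∈ [d]`. -/
def bigBody (I : LabelCover X Y A B) (d : ℕ) : Finset (PV X Y A B) :=
  (I.E ×ˢ Finset.Icc 1 d).image fun p => PV.e p.1.1 p.1.2 p.2

/-- Clauses (d): `⋀_{i ∈ [d]} ⋀_{(x,y) ∈ E} e(x,y,i) → u(ℓ)` for `ℓ ∈ L ∪ L′`. -/
def clD (I : LabelCover X Y A B) (d : ℕ) : Finset (Clause (PV X Y A B)) :=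
  (Finset.univ : Finset (Lab X Y A B)).image fun ℓ => ⟨{PV.u ℓ}, bigBody I d⟩

/-- Clauses (e): `v(j) → u(ℓ)` for `j ∈ [t]`, `ℓ ∈ L ∪ L′`. -/
def clE (X Y A B : Type*) [Fintype X] [Fintype Y] [Fintype A] [Fintype B]
    [DecidableEq X] [DecidableEq Y] [DecidableEq A] [DecidableEq B]
    (t : ℕ) : Finset (Clause (PV X Y A B)) :=
  (Finset.Icc 1 t ×ˢ (Finset.univ : Finset (Lab X Y A B))).image fun p =>
    ⟨{PV.u p.2}, {PV.v p.1}⟩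

/-- The canonical formula `Ψ`: clauses of types (a)–(d). -/
def PsiCNF (I : LabelCover X Y A B) (d : ℕ) : Finset (Clause (PV X Y A B)) :=
  clA I d ∪ clB I d ∪ clC I d ∪ clD I d

/-- The canonical formula `Φ`: clauses of types (a)–(e). -/
def PhiCNF (I : LabelCover X Y A B) (d t : ℕ) : Finset (Clause (PV X Y A B)) :=
  PsiCNF I d ∪ clE X Y A B t

/-- The pure Horn function `h` represented by the canonical formula `Φ`. -/
def hFun (I : LabelCover X Y A B) (d t : ℕ) : (PV X Y A B → Bool) → Prop :=
  fun a => evalCNF (PhiCNF I d t) a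

/-- The pure Horn function `g` represented by the canonical formula `Ψ`. -/
def gFun (I : LabelCover X Y A B) (d : ℕ) : (PV X Y A B → Bool) → Prop :=
  fun a => evalCNF (PsiCNF I d) a

end Canonical

section HornClosure

variable {Γ Δ : Finset (Clause V)} {Q T : Set V} {w : V}

theorem fcClosure_subset (hQ : Q ⊆ T)
    (hT : ∀ C ∈ Γ, ∀ v : V, C.pos = {v} → ↑C.neg ⊆ T → v ∈ T) :
    fcClosure Γ Q ⊆ T :=
  Set.sInter_subset_of_mem ⟨hQ, hT⟩

theorem subset_fcClosure : Q ⊆ fcClosure Γ Q :=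
  Set.subset_sInter fun _ hT => hT.1

theorem head_mem_fcClosure {C : Clause V} (hC : C ∈ Γ) (hw : C.pos = {w})
    (hn : ↑C.neg ⊆ fcClosure Γ Q) : w ∈ fcClosure Γ Q :=
  Set.mem_sInter.mpr fun _ hT =>
    hT.2 C hC w hw fun _ hu => Set.mem_sInter.mp (hn hu) _ hT

theorem fcClosure_mono (h : Q ⊆ T) : fcClosure Γ Q ⊆ fcClosure Γ T :=
  fcClosure_subset (h.trans subset_fcClosure) fun _ hC _ => head_mem_fcClosure hC

theorem fcClosure_fcClosure_subset : fcClosure Γ (fcClosure Γ Q) ⊆ fcClosure Γ Q :=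
  fcClosure_subset subset_rfl fun _ hC _ => head_mem_fcClosure hC

theorem fcClosure_subset_of_heads (hQ : Q ⊆ T) (hΓ : ∀ C ∈ Γ, ∀ v, C.pos = {v} → v ∈ T) :
    fcClosure Γ Q ⊆ T :=
  fcClosure_subset hQ fun C hC v hv _ => hΓ C hC v hv

theorem exists_head_of_mem_fcClosure (hQ : Q ⊆ T) (hΓ : ∀ C ∈ Γ, ∀ v, C.pos = {v} → v ∈ T)
    (hw : w ∈ fcClosure Γ Q) (hwQ : w ∉ Q) : ∃ C ∈ Γ, C.pos = {w} ∧ ↑C.neg ⊆ T := by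
  have hcl : fcClosure Γ Q ⊆ Q ∪ {v | ∃ C ∈ Γ, C.pos = {v} ∧ ↑C.neg ⊆ T} := by
    have hsub : Q ∪ {v | ∃ C ∈ Γ, C.pos = {v} ∧ ↑C.neg ⊆ T} ⊆ T :=
      Set.union_subset hQ fun v ⟨C, hC, hv, _⟩ => hΓ C hC v hv
    exact fcClosure_subset Set.subset_union_left fun C hC v hv hn =>
      Or.inr ⟨C, hC, hv, hn.trans hsub⟩
  exact (hcl hw).resolve_left hwQ

theorem fcClosure_singleton_subset [DecidableEq V] (w : V) :
    fcClosure Γ {w} ⊆ insert w (fcClosure Γ ↑((Γ.filter (w ∈ ·.neg)).biUnion (·.pos))) := by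
  refine fcClosure_subset (by simp) fun C hC v hv hn => Or.inr ?_
  by_cases hwC : w ∈ C.neg
  · exact subset_fcClosure (Finset.mem_coe.mpr
      (Finset.mem_biUnion.mpr ⟨C, Finset.mem_filter.mpr ⟨hC, hwC⟩, by simp [hv]⟩))
  · exact head_mem_fcClosure hC hv fun u hu =>
      (hn hu).resolve_left fun h => hwC (h ▸ hu)

theorem eval_eq_true_of_mem_fcClosure {a : V → Bool} (ha : evalCNF Γ a)
    (hQ : ∀ q ∈ Q, a q = true) (hw : w ∈ fcClosure Γ Q) : a w = true := by
  refine fcClosure_subset (T := {v | a v = true}) hQ (fun C hC v hv hn => ?_) hw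
  rcases ha C hC with ⟨u, hu, hau⟩ | ⟨u, hu, hau⟩
  · rw [hv, Finset.mem_singleton] at hu
    exact hu ▸ hau
  · exact absurd (hn hu) (by simp [hau])

theorem implicate_of_mem_fcClosure {h : (V → Bool) → Prop} (hrep : Represents Δ h)
    {S : Finset V} (hw : w ∈ fcClosure Δ ↑S) : Implicate h ⟨{w}, S⟩ := by
  intro a hev hha
  refine hev (Or.inl ⟨w, Finset.mem_singleton_self w, ?_⟩)
  refine eval_eq_true_of_mem_fcClosure ((hrep a).mpr hha) (fun q hq => ?_) hw
  by_contra hq'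
  exact hev (Or.inr ⟨q, hq, by simpa using hq'⟩)

theorem Clause.eval_of_mem_fcClosure {a : V → Bool} (ha : evalCNF Γ a) {C : Clause V}
    (hw : C.pos = {w}) (hC : w ∈ fcClosure Γ ↑C.neg) : C.eval a := by
  by_contra hev
  refine implicate_of_mem_fcClosure (fun _ => Iff.rfl) hC a ?_ ha
  rwa [← hw]

theorem implicate_of_mem {h : (V → Bool) → Prop} (hrep : Represents Δ h) {C : Clause V}
    (hC : C ∈ Δ) : Implicate h C :=
  fun a hev hha => hev ((hrep a).mpr hha C hC)

/-- Otherwise the indicator of the closure is a model of `Δ` falsifying `C`. -/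
theorem Implicate.head_mem_fcClosure {h : (V → Bool) → Prop} (hΔ : IsPureHornCNF Δ)
    (hrep : Represents Δ h) {C : Clause V} (hC : Implicate h C) (hw : C.pos = {w})
    (hQ : ↑C.neg ⊆ Q) : w ∈ fcClosure Δ Q := by
  classical
  by_contra hwQ
  let a : V → Bool := fun v => decide (v ∈ fcClosure Δ Q)
  refine hC a ?_ ((hrep a).mp fun C' hC' => ?_)
  · rintro (⟨v, hv, hva⟩ | ⟨v, hv, hva⟩)
    · rw [hw, Finset.mem_singleton] at hv
      subst hv
      exact hwQ (by simpa [a] using hva)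
    · exact absurd (subset_fcClosure (hQ hv)) (by simpa [a] using hva)
  · obtain ⟨v, hv⟩ := (hΔ C' hC').2
    by_cases hn : ↑C'.neg ⊆ fcClosure Δ Q
    · exact Or.inl ⟨v, by simp [hv], by simpa [a] using _root_.head_mem_fcClosure hC' hv hn⟩
    · obtain ⟨u, hu, huQ⟩ := Set.not_subset.mp hn
      exact Or.inr ⟨u, hu, by simpa [a] using huQ⟩

theorem Implicate.exists_head {h : (V → Bool) → Prop} (hΔ : IsPureHornCNF Δ)
    (hrep : Represents Δ h) {C : Clause V} (hC : Implicate h C) (hcl : C.IsClause)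
    (hw : C.pos = {w}) : ∃ C' ∈ Δ, C'.pos = {w} := by
  have hwC : w ∉ (↑C.neg : Set V) :=
    Finset.disjoint_left.mp hcl (hw ▸ Finset.mem_singleton_self w)
  obtain ⟨C', hC', hw', -⟩ := exists_head_of_mem_fcClosure (T := Set.univ) (Set.subset_univ _)
    (fun _ _ _ _ => trivial) (hC.head_mem_fcClosure hΔ hrep hw subset_rfl) hwC
  exact ⟨C', hC', hw'⟩

theorem fcClosure_subset_fcClosure_of_implicate {h : (V → Bool) → Prop}
    (hΔ : IsPureHornCNF Δ) (hrep : Represents Δ h) (hΓ : ∀ C ∈ Γ, Implicate h C) :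
    fcClosure Γ Q ⊆ fcClosure Δ Q :=
  fcClosure_subset subset_fcClosure fun C hC _ hv hn =>
    fcClosure_fcClosure_subset ((hΓ C hC).head_mem_fcClosure hΔ hrep hv hn)

theorem card_biUnion_pos_le [DecidableEq V] (hΓ : IsPureHornCNF Γ) :
    (Γ.biUnion (·.pos)).card ≤ Γ.card :=
  Finset.card_biUnion_le_card_mul _ _ 1 (fun C hC => by
    obtain ⟨v, hv⟩ := (hΓ C hC).2
    simp [hv]) |>.trans_eq (mul_one _)

end HornClosure

section ClauseFamilies

variable {X Y A B : Type*} [DecidableEq X] [DecidableEq Y] [DecidableEq A] [DecidableEq B]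
  {I : LabelCover X Y A B} {d t : ℕ}

theorem mem_bigBody {x : X} {y : Y} {i : ℕ} (hxy : (x, y) ∈ I.E) (hi : i ∈ Finset.Icc 1 d) :
    PV.e x y i ∈ bigBody I d :=
  Finset.mem_image.mpr ⟨((x, y), i), Finset.mem_product.mpr ⟨hxy, hi⟩, rfl⟩

theorem mem_clA {x : X} {y : Y} {a : A} {b : B} {i : ℕ} (hxy : (x, y) ∈ I.E)
    (hab : (a, b) ∈ I.cst (x, y)) (hi : i ∈ Finset.Icc 1 d) :
    (⟨{PV.el x y b i}, {PV.u (.inl (x, a)), PV.u (.inr (y, b))}⟩ : Clause (PV X Y A B)) ∈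
      clA I d :=
  Finset.mem_biUnion.mpr ⟨((x, y), i), Finset.mem_product.mpr ⟨hxy, hi⟩,
    Finset.mem_image.mpr ⟨(a, b), hab, rfl⟩⟩

theorem mem_clB [Fintype X] [Fintype B] {x : X} {y : Y} {i : ℕ} (b : B) (hxy : (x, y) ∈ I.E)
    (hi : i ∈ Finset.Icc 1 d) :
    (⟨{PV.e x y i}, (Nbr I y).image fun z => PV.el z y b i⟩ : Clause (PV X Y A B)) ∈
      clB I d :=
  Finset.mem_image.mpr ⟨(((x, y), b), i), by simp_all, rfl⟩

theorem mem_clC [Fintype B] {x : X} {y : Y} {i : ℕ} (b : B) (hxy : (x, y) ∈ I.E)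
    (hi : i ∈ Finset.Icc 1 d) :
    (⟨{PV.el x y b i}, {PV.e x y i}⟩ : Clause (PV X Y A B)) ∈ clC I d :=
  Finset.mem_image.mpr ⟨(((x, y), b), i), by simp_all, rfl⟩

theorem exists_of_mem_clA {C : Clause (PV X Y A B)} (hC : C ∈ clA I d) :
    ∃ x y a b i, (x, y) ∈ I.E ∧ (a, b) ∈ I.cst (x, y) ∧ i ∈ Finset.Icc 1 d ∧
      C = ⟨{PV.el x y b i}, {PV.u (.inl (x, a)), PV.u (.inr (y, b))}⟩ := by
  obtain ⟨⟨⟨x, y⟩, i⟩, hp, hC⟩ := Finset.mem_biUnion.mp hC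
  obtain ⟨⟨a, b⟩, hab, rfl⟩ := Finset.mem_image.mp hC
  exact ⟨x, y, a, b, i, (Finset.mem_product.mp hp).1, hab, (Finset.mem_product.mp hp).2, rfl⟩

theorem exists_of_mem_clB [Fintype X] [Fintype B] {C : Clause (PV X Y A B)} (hC : C ∈ clB I d) :
    ∃ x y b i, (x, y) ∈ I.E ∧ i ∈ Finset.Icc 1 d ∧
      C = ⟨{PV.e x y i}, (Nbr I y).image fun z => PV.el z y b i⟩ := by
  obtain ⟨⟨⟨⟨x, y⟩, b⟩, i⟩, hp, rfl⟩ := Finset.mem_image.mp hC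
  simp only [Finset.mem_product, Finset.mem_univ, and_true] at hp
  exact ⟨x, y, b, i, hp.1, hp.2, rfl⟩

theorem exists_of_mem_clC [Fintype B] {C : Clause (PV X Y A B)} (hC : C ∈ clC I d) :
    ∃ x y b i, (x, y) ∈ I.E ∧ i ∈ Finset.Icc 1 d ∧ C = ⟨{PV.el x y b i}, {PV.e x y i}⟩ := by
  obtain ⟨⟨⟨⟨x, y⟩, b⟩, i⟩, hp, rfl⟩ := Finset.mem_image.mp hC
  simp only [Finset.mem_product, Finset.mem_univ, and_true] at hp
  exact ⟨x, y, b, i, hp.1, hp.2, rfl⟩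

end ClauseFamilies

section CanonicalFormula

variable {X Y A B : Type*} [Fintype X] [Fintype Y] [Fintype A] [Fintype B]
  [DecidableEq X] [DecidableEq Y] [DecidableEq A] [DecidableEq B]
  {I : LabelCover X Y A B} {d t : ℕ}

def vVars : Set (PV X Y A B) := Set.range PV.v

/-- The variables that occur as heads of clauses of `Φ`. -/
def headVars (I : LabelCover X Y A B) (d : ℕ) : Finset (PV X Y A B) :=
  Finset.univ.image PV.u ∪ bigBody I d ∪
    ((I.E ×ˢ Finset.univ) ×ˢ Finset.Icc 1 d).image fun p => PV.el p.1.1.1 p.1.1.2 p.1.2 p.2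

theorem u_mem_headVars (ℓ : Lab X Y A B) : PV.u ℓ ∈ headVars I d := by
  simp [headVars]

theorem e_mem_headVars {x : X} {y : Y} {i : ℕ} (hxy : (x, y) ∈ I.E) (hi : i ∈ Finset.Icc 1 d) :
    PV.e x y i ∈ headVars I d :=
  Finset.mem_union_left _ (Finset.mem_union_right _ (mem_bigBody hxy hi))

theorem el_mem_headVars {x : X} {y : Y} {b : B} {i : ℕ} (hxy : (x, y) ∈ I.E)
    (hi : i ∈ Finset.Icc 1 d) : PV.el x y b i ∈ headVars I d := by
  simp_all [headVars]

theorem headVars_disjoint_vVars : Disjoint (↑(headVars I d) : Set (PV X Y A B)) vVars :=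
  Set.disjoint_left.mpr fun _ hw ⟨_, hj⟩ => by subst hj; simp [headVars, bigBody] at hw

theorem mem_clD (ℓ : Lab X Y A B) :
    (⟨{PV.u ℓ}, bigBody I d⟩ : Clause (PV X Y A B)) ∈ clD I d :=
  Finset.mem_image.mpr ⟨ℓ, Finset.mem_univ _, rfl⟩

theorem mem_clE {j : ℕ} (hj : j ∈ Finset.Icc 1 t) (ℓ : Lab X Y A B) :
    (⟨{PV.u ℓ}, {PV.v j}⟩ : Clause (PV X Y A B)) ∈ clE X Y A B t :=
  Finset.mem_image.mpr ⟨(j, ℓ), Finset.mem_product.mpr ⟨hj, Finset.mem_univ _⟩, rfl⟩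

theorem exists_of_mem_clD {C : Clause (PV X Y A B)} (hC : C ∈ clD I d) :
    ∃ ℓ, C = ⟨{PV.u ℓ}, bigBody I d⟩ := by
  obtain ⟨ℓ, -, rfl⟩ := Finset.mem_image.mp hC
  exact ⟨ℓ, rfl⟩

theorem exists_of_mem_clE {C : Clause (PV X Y A B)} (hC : C ∈ clE X Y A B t) :
    ∃ j ℓ, j ∈ Finset.Icc 1 t ∧ C = ⟨{PV.u ℓ}, {PV.v j}⟩ := by
  obtain ⟨⟨j, ℓ⟩, hp, rfl⟩ := Finset.mem_image.mp hC
  exact ⟨j, ℓ, (Finset.mem_product.mp hp).1, rfl⟩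

theorem psiCNF_cases {C : Clause (PV X Y A B)} (hC : C ∈ PsiCNF I d) :
    C ∈ clA I d ∨ C ∈ clB I d ∨ C ∈ clC I d ∨ C ∈ clD I d := by
  simp only [PsiCNF, Finset.mem_union] at hC
  tauto

theorem psiCNF_subset_phiCNF : PsiCNF I d ⊆ PhiCNF I d t := Finset.subset_union_left

theorem clA_subset_psiCNF : clA I d ⊆ PsiCNF I d := fun _ hC => by
  simp [PsiCNF, hC]

theorem clB_subset_psiCNF : clB I d ⊆ PsiCNF I d := fun _ hC => by
  simp [PsiCNF, hC]

theorem clC_subset_psiCNF : clC I d ⊆ PsiCNF I d := fun _ hC => by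
  simp [PsiCNF, hC]

theorem clD_subset_psiCNF : clD I d ⊆ PsiCNF I d := Finset.subset_union_right

theorem clE_subset_phiCNF : clE X Y A B t ⊆ PhiCNF I d t := Finset.subset_union_right

theorem isClause_and_exists_head_of_mem_phiCNF {C : Clause (PV X Y A B)}
    (hC : C ∈ PhiCNF I d t) : C.IsClause ∧ ∃ w ∈ headVars I d, C.pos = {w} := by
  rcases Finset.mem_union.mp hC with hC | hC
  · rcases psiCNF_cases hC with h | h | h | h
    · obtain ⟨x, y, a, b, i, hxy, -, hi, rfl⟩ := exists_of_mem_clA h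
      exact ⟨by simp [Clause.IsClause], _, el_mem_headVars hxy hi, rfl⟩
    · obtain ⟨x, y, b, i, hxy, hi, rfl⟩ := exists_of_mem_clB h
      exact ⟨by simp [Clause.IsClause], _, e_mem_headVars hxy hi, rfl⟩
    · obtain ⟨x, y, b, i, hxy, hi, rfl⟩ := exists_of_mem_clC h
      exact ⟨by simp [Clause.IsClause], _, el_mem_headVars hxy hi, rfl⟩
    · obtain ⟨ℓ, rfl⟩ := exists_of_mem_clD h
      exact ⟨by simp [Clause.IsClause, bigBody], _, u_mem_headVars ℓ, rfl⟩
  · obtain ⟨j, ℓ, -, rfl⟩ := exists_of_mem_clE hC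
    exact ⟨by simp [Clause.IsClause], _, u_mem_headVars ℓ, rfl⟩

theorem represents_phiCNF : Represents (PhiCNF I d t) (hFun I d t) := fun _ => Iff.rfl

theorem isPureHornCNF_phiCNF : IsPureHornCNF (PhiCNF I d t) := fun _ hC =>
  let ⟨hcl, w, _, hw⟩ := isClause_and_exists_head_of_mem_phiCNF hC
  ⟨hcl, w, hw⟩

theorem head_mem_headVars_of_mem_phiCNF {C : Clause (PV X Y A B)} (hC : C ∈ PhiCNF I d t)
    {w : PV X Y A B} (hw : C.pos = {w}) : w ∈ headVars I d := by
  obtain ⟨-, w', hw', hC'⟩ := isClause_and_exists_head_of_mem_phiCNF hC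
  rwa [Finset.singleton_inj.mp (hw.symm.trans hC')]

theorem fcClosure_psiCNF_subset_compl_vVars {Q : Set (PV X Y A B)} (hQ : Q ⊆ vVarsᶜ) :
    fcClosure (PsiCNF I d) Q ⊆ vVarsᶜ :=
  fcClosure_subset_of_heads hQ fun _ hC _ hw =>
    headVars_disjoint_vVars.notMem_of_mem_left
      (head_mem_headVars_of_mem_phiCNF (t := 0) (psiCNF_subset_phiCNF hC) hw)

/-- The clauses (e) never fire: their bodies `v j` are never derived. -/
theorem fcClosure_phiCNF_subset_psiCNF {Q : Set (PV X Y A B)} (hQ : Q ⊆ vVarsᶜ) :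
    fcClosure (PhiCNF I d t) Q ⊆ fcClosure (PsiCNF I d) Q := by
  refine fcClosure_subset subset_fcClosure fun C hC w hw hn => ?_
  rcases Finset.mem_union.mp hC with hC | hC
  · exact head_mem_fcClosure hC hw hn
  · obtain ⟨j, ℓ, -, rfl⟩ := exists_of_mem_clE hC
    exact (fcClosure_psiCNF_subset_compl_vVars hQ (hn (Finset.mem_singleton_self _)) ⟨j, rfl⟩).elim

theorem exists_psiCNF_head {w : PV X Y A B} (hw : w ∈ headVars I d) :
    ∃ C ∈ PsiCNF I d, C.pos = {w} ∧ w ∉ C.neg ∧ ↑C.neg ⊆ (vVars : Set (PV X Y A B))ᶜ := by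
  simp only [headVars, bigBody, Finset.mem_union, Finset.mem_image, Finset.mem_univ,
    true_and, Finset.mem_product] at hw
  rcases hw with (⟨ℓ, rfl⟩ | ⟨⟨⟨x, y⟩, i⟩, ⟨hxy, hi⟩, rfl⟩) |
    ⟨⟨⟨⟨x, y⟩, b⟩, i⟩, ⟨⟨hxy, -⟩, hi⟩, rfl⟩
  · refine ⟨_, clD_subset_psiCNF (mem_clD ℓ), rfl, by simp [bigBody], ?_⟩
    rintro _ hw ⟨j, rfl⟩
    simp [bigBody] at hw
  · obtain ⟨⟨a, b⟩, -⟩ := I.cst_nonempty _ hxy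
    refine ⟨_, clB_subset_psiCNF (mem_clB b hxy hi), rfl, ?_, ?_⟩ <;>
      simp [Set.subset_def, vVars]
  · refine ⟨_, clC_subset_psiCNF (mem_clC b hxy hi), rfl, ?_, ?_⟩ <;>
      simp [Set.subset_def, vVars]

end CanonicalFormula

section Covers

variable {X Y A B : Type*} [Fintype X] [Fintype Y] [Fintype A] [Fintype B]
  [DecidableEq A] [DecidableEq B] {f : X → Finset A} {g : Y → Finset B}

def labelSet {Z L : Type*} [Fintype Z] [Fintype L] [DecidableEq L] (f : Z → Finset L) :
    Finset (Z × L) :=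
  Finset.univ.filter fun p => p.2 ∈ f p.1

theorem card_labelSet {Z L : Type*} [Fintype Z] [Fintype L] [DecidableEq L]
    (f : Z → Finset L) : (labelSet f).card = ∑ z, (f z).card := by
  rw [labelSet, Finset.card_filter, Fintype.sum_prod_type]
  simp

def coverLabels (f : X → Finset A) (g : Y → Finset B) : Finset (Lab X Y A B) :=
  (labelSet f).disjSum (labelSet g)

theorem inl_mem_coverLabels {x : X} {a : A} :
    (.inl (x, a) : Lab X Y A B) ∈ coverLabels f g ↔ a ∈ f x := by
  simp [coverLabels, labelSet]

theorem inr_mem_coverLabels {y : Y} {b : B} :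
    (.inr (y, b) : Lab X Y A B) ∈ coverLabels f g ↔ b ∈ g y := by
  simp [coverLabels, labelSet]

theorem card_coverLabels_of_tight (hg : LabelCover.Tight g) :
    (coverLabels f g).card = ∑ x, (f x).card + Fintype.card Y := by
  simp [coverLabels, card_labelSet, show ∀ y, (g y).card = 1 from hg]

variable [DecidableEq X] [DecidableEq Y] {I : LabelCover X Y A B} {d t : ℕ}

theorem headVars_subset_fcClosure {Γ : Finset (Clause (PV X Y A B))} (hΓ : PsiCNF I d ⊆ Γ)
    (hcov : I.IsTotalCover f g) {Q : Set (PV X Y A B)}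
    (hQ : ∀ ℓ ∈ coverLabels f g, PV.u ℓ ∈ fcClosure Γ Q) :
    ↑(headVars I d) ⊆ fcClosure Γ Q := by
  have hel : ∀ z y, (z, y) ∈ I.E → ∀ b ∈ g y, ∀ i ∈ Finset.Icc 1 d,
      PV.el z y b i ∈ fcClosure Γ Q := by
    intro z y hzy b hb i hi
    obtain ⟨a, ha, hab⟩ := hcov.2 (z, y) hzy b hb
    refine head_mem_fcClosure (hΓ (clA_subset_psiCNF (mem_clA hzy hab hi))) rfl ?_
    simp only [Finset.coe_insert, Finset.coe_singleton, Set.insert_subset_iff,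
      Set.singleton_subset_iff]
    exact ⟨hQ _ (inl_mem_coverLabels.mpr ha), hQ _ (inr_mem_coverLabels.mpr hb)⟩
  have he : ∀ x y, (x, y) ∈ I.E → ∀ i ∈ Finset.Icc 1 d, PV.e x y i ∈ fcClosure Γ Q := by
    intro x y hxy i hi
    obtain ⟨b, hb⟩ := hcov.1 y
    refine head_mem_fcClosure (hΓ (clB_subset_psiCNF (mem_clB b hxy hi))) rfl ?_
    simp only [Finset.coe_image, Set.image_subset_iff]
    exact fun z hz => hel z y (by simpa [Nbr] using hz) b hb i hi
  intro w hw
  simp only [headVars, bigBody, Finset.coe_union, Finset.coe_image, Set.mem_union,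
    Set.mem_image, Finset.mem_coe, Finset.mem_product] at hw
  rcases hw with (⟨ℓ, -, rfl⟩ | ⟨⟨⟨x, y⟩, i⟩, ⟨hxy, hi⟩, rfl⟩) |
    ⟨⟨⟨⟨x, y⟩, b⟩, i⟩, ⟨⟨hxy, -⟩, hi⟩, rfl⟩
  · refine head_mem_fcClosure (hΓ (clD_subset_psiCNF (mem_clD ℓ))) rfl fun w hw => ?_
    obtain ⟨⟨⟨x, y⟩, i⟩, hp, rfl⟩ := Finset.mem_image.mp hw
    exact he x y (Finset.mem_product.mp hp).1 i (Finset.mem_product.mp hp).2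
  · exact he x y hxy i hi
  · refine head_mem_fcClosure (hΓ (clC_subset_psiCNF (mem_clC b hxy hi))) rfl ?_
    simpa using he x y hxy i hi

theorem headVars_subset_fcClosure_v {Γ : Finset (Clause (PV X Y A B))} (hΓ : PsiCNF I d ⊆ Γ)
    (hcov : I.IsTotalCover f g) {j : ℕ}
    (hj : ∀ ℓ ∈ coverLabels f g, ⟨{PV.u ℓ}, {PV.v j}⟩ ∈ Γ) :
    ↑(headVars I d) ⊆ fcClosure Γ {PV.v j} :=
  headVars_subset_fcClosure hΓ hcov fun ℓ hℓ =>
    head_mem_fcClosure (hj ℓ hℓ) rfl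
      (by simpa using subset_fcClosure (Γ := Γ) (Set.mem_singleton _))

theorem headVars_subset_fcClosure_phiCNF (hcov : I.IsTotalCover f g) {j : ℕ}
    (hj : j ∈ Finset.Icc 1 t) : ↑(headVars I d) ⊆ fcClosure (PhiCNF I d t) {PV.v j} :=
  headVars_subset_fcClosure_v psiCNF_subset_phiCNF hcov fun ℓ _ =>
    clE_subset_phiCNF (mem_clE hj ℓ)

def coverCNF (I : LabelCover X Y A B) (d t : ℕ) (f : X → Finset A) (g : Y → Finset B) :
    Finset (Clause (PV X Y A B)) :=
  PsiCNF I d ∪ (Finset.Icc 1 t ×ˢ coverLabels f g).image fun p => ⟨{PV.u p.2}, {PV.v p.1}⟩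

theorem coverCNF_subset_phiCNF : coverCNF I d t f g ⊆ PhiCNF I d t := by
  refine Finset.union_subset psiCNF_subset_phiCNF fun C hC => ?_
  obtain ⟨⟨j, ℓ⟩, hp, rfl⟩ := Finset.mem_image.mp hC
  exact clE_subset_phiCNF (mem_clE (Finset.mem_product.mp hp).1 ℓ)

theorem card_coverCNF_le :
    (coverCNF I d t f g).card ≤ (PsiCNF I d).card + t * (coverLabels f g).card := by
  refine (Finset.card_union_le _ _).trans (Nat.add_le_add_left (Finset.card_image_le.trans ?_) _)
  simp

theorem represents_coverCNF (hcov : I.IsTotalCover f g) :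
    Represents (coverCNF I d t f g) (hFun I d t) := by
  refine fun a => ⟨fun ha C hC => ?_, fun ha C hC => ha C (coverCNF_subset_phiCNF hC)⟩
  rcases Finset.mem_union.mp hC with hC | hC
  · exact ha C (Finset.mem_union_left _ hC)
  · obtain ⟨j, ℓ, hj, rfl⟩ := exists_of_mem_clE hC
    refine Clause.eval_of_mem_fcClosure ha rfl ?_
    rw [Finset.coe_singleton]
    refine headVars_subset_fcClosure_v Finset.subset_union_left hcov (fun ℓ' hℓ' => ?_)
      (u_mem_headVars ℓ)
    exact Finset.mem_union_right _ (Finset.mem_image.mpr ⟨(j, ℓ'), by simp_all, rfl⟩)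

end Covers

section Extraction

variable {X Y A B : Type*} {I : LabelCover X Y A B} {H : Finset (PV X Y A B)} {y : Y} {i₀ : ℕ}

def level : PV X Y A B → ℕ
  | .e _ _ i => i
  | .el _ _ _ i => i
  | _ => 0

/-- If no label of `y` is supported by `H` and `H` avoids level `i₀`, forward chaining in `Ψ`
from `H` stays in this set: at level `i₀` on the edges at `y` only the variables
`e(z,y,ℓ′,i₀)` fired directly by clauses (a) on `H` are derivable, so no `e(x,y,i₀)` is, and
the clauses (d) never fire. -/
def blockingSet (I : LabelCover X Y A B) (H : Finset (PV X Y A B)) (y : Y) (i₀ : ℕ) :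
    Set (PV X Y A B) := fun w =>
  match w with
  | .u ℓ => PV.u ℓ ∈ H
  | .e _ y' i => ¬(y' = y ∧ i = i₀)
  | .el z y' b i => ¬(y' = y ∧ i = i₀) ∨
      (PV.u (.inr (y, b)) ∈ H ∧ ∃ a, PV.u (.inl (z, a)) ∈ H ∧ (a, b) ∈ I.cst (z, y))
  | .v _ => True

theorem e_mem_blockingSet {x : X} {y' : Y} {i : ℕ} :
    PV.e x y' i ∈ blockingSet I H y i₀ ↔ ¬(y' = y ∧ i = i₀) :=
  Iff.rfl

theorem el_mem_blockingSet {z : X} {y' : Y} {b : B} {i : ℕ} :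
    PV.el z y' b i ∈ blockingSet I H y i₀ ↔ ¬(y' = y ∧ i = i₀) ∨
      (PV.u (.inr (y, b)) ∈ H ∧ ∃ a, PV.u (.inl (z, a)) ∈ H ∧ (a, b) ∈ I.cst (z, y)) :=
  Iff.rfl

theorem subset_blockingSet (hH : i₀ ∉ H.image level) : ↑H ⊆ blockingSet I H y i₀ := by
  intro w hw
  have hlevel : level w ≠ i₀ := fun h => hH (Finset.mem_image.mpr ⟨w, hw, h⟩)
  cases w with
  | u ℓ => exact hw
  | e x y' i => exact fun h => hlevel h.2
  | el z y' b i => exact Or.inl fun h => hlevel h.2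
  | v j => trivial

variable [Fintype X] [Fintype Y] [Fintype A] [Fintype B]
  [DecidableEq X] [DecidableEq Y] [DecidableEq A] [DecidableEq B] {d : ℕ}

def Supports (I : LabelCover X Y A B) (H : Finset (PV X Y A B)) (y : Y) (b : B) : Prop :=
  PV.u (.inr (y, b)) ∈ H ∧
    ∀ z ∈ Nbr I y, ∃ a, PV.u (.inl (z, a)) ∈ H ∧ (a, b) ∈ I.cst (z, y)

theorem head_mem_blockingSet (hy : ∃ x, (x, y) ∈ I.E) (hi₀ : i₀ ∈ Finset.Icc 1 d)
    (hns : ∀ b, ¬Supports I H y b) {C : Clause (PV X Y A B)} (hC : C ∈ PsiCNF I d)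
    {w : PV X Y A B} (hw : C.pos = {w}) (hn : ↑C.neg ⊆ blockingSet I H y i₀) :
    w ∈ blockingSet I H y i₀ := by
  rcases psiCNF_cases hC with h | h | h | h
  · obtain ⟨x, y', a, b, i, -, hab, -, rfl⟩ := exists_of_mem_clA h
    obtain rfl := Finset.singleton_inj.mp hw
    have hxa : PV.u (.inl (x, a)) ∈ H := hn (Finset.mem_coe.mpr (Finset.mem_insert_self _ _))
    have hyb : PV.u (.inr (y', b)) ∈ H :=
      hn (Finset.mem_coe.mpr (Finset.mem_insert_of_mem (Finset.mem_singleton_self _)))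
    by_cases hyi : y' = y ∧ i = i₀
    · obtain ⟨rfl, rfl⟩ := hyi
      exact Or.inr ⟨hyb, a, hxa, hab⟩
    · exact Or.inl hyi
  · obtain ⟨x, y', b, i, hxy, -, rfl⟩ := exists_of_mem_clB h
    obtain rfl := Finset.singleton_inj.mp hw
    rintro ⟨rfl, rfl⟩
    have hel : ∀ z ∈ Nbr I y', PV.u (.inr (y', b)) ∈ H ∧
        ∃ a, PV.u (.inl (z, a)) ∈ H ∧ (a, b) ∈ I.cst (z, y') := fun z hz =>
      (el_mem_blockingSet.mp (hn (Finset.mem_coe.mpr (Finset.mem_image_of_mem _ hz)))).resolve_left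
        (by simp)
    exact hns b ⟨(hel x (by simpa [Nbr] using hxy)).1, fun z hz => (hel z hz).2⟩
  · obtain ⟨x, y', b, i, -, -, rfl⟩ := exists_of_mem_clC h
    obtain rfl := Finset.singleton_inj.mp hw
    exact Or.inl (e_mem_blockingSet.mp (hn (Finset.mem_coe.mpr (Finset.mem_singleton_self _))))
  · obtain ⟨ℓ, rfl⟩ := exists_of_mem_clD h
    obtain ⟨x, hxy⟩ := hy
    exact absurd ⟨rfl, rfl⟩ (e_mem_blockingSet.mp (hn (mem_bigBody hxy hi₀)))

theorem exists_supports (hY : ∀ y : Y, ∃ x, (x, y) ∈ I.E) {f : X → Finset A} {g : Y → Finset B}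
    (hcov : I.IsTotalCover f g) (hH : H.card < d)
    (hall : ∀ ℓ, PV.u ℓ ∈ fcClosure (PsiCNF I d) ↑H) (y : Y) : ∃ b, Supports I H y b := by
  obtain ⟨i₀, hi₀, hH₀⟩ : ∃ i₀ ∈ Finset.Icc 1 d, i₀ ∉ H.image level :=
    Finset.exists_mem_notMem_of_card_lt_card (Finset.card_image_le.trans_lt (by simpa using hH))
  by_contra! hns
  have hallH : ∀ ℓ, PV.u ℓ ∈ H := fun ℓ =>
    fcClosure_subset (subset_blockingSet hH₀)
      (fun _ hC _ => head_mem_blockingSet (hY y) hi₀ hns hC) (hall ℓ)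
  obtain ⟨b, hb⟩ := hcov.1 y
  refine hns b ⟨hallH _, fun z hz => ?_⟩
  obtain ⟨a, -, hab⟩ := hcov.2 (z, y) (by simpa [Nbr] using hz) b hb
  exact ⟨a, hallH _, hab⟩

theorem exists_tight_cover_of_supports (hs : ∀ y, ∃ b, Supports I H y b) :
    ∃ (f₀ : X → Finset A) (g₀ : Y → Finset B), I.IsTotalCover f₀ g₀ ∧ LabelCover.Tight g₀ ∧
      ∀ ℓ ∈ coverLabels f₀ g₀, PV.u ℓ ∈ H := by
  choose b hbH hb using hs
  refine ⟨fun x => Finset.univ.filter fun a => PV.u (.inl (x, a)) ∈ H, fun y => {b y},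
    ⟨fun y => Finset.singleton_nonempty _, ?_⟩, fun y => Finset.card_singleton _, ?_⟩
  · rintro ⟨x, y⟩ hxy b' hb'
    obtain rfl := Finset.mem_singleton.mp hb'
    obtain ⟨a, ha, hab⟩ := hb y x (by simpa [Nbr] using hxy)
    exact ⟨a, by simpa using ha, hab⟩
  · rintro (⟨x, a⟩ | ⟨y, b'⟩) hℓ
    · simpa using inl_mem_coverLabels.mp hℓ
    · obtain rfl : b' = b y := by simpa using inr_mem_coverLabels.mp hℓ
      exact hbH y

theorem exists_tight_cover_card_le (hY : ∀ y : Y, ∃ x, (x, y) ∈ I.E) {f : X → Finset A}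
    {g : Y → Finset B} (hcov : I.IsTotalCover f g) (hH : H.card < d)
    (hall : ∀ ℓ, PV.u ℓ ∈ fcClosure (PsiCNF I d) ↑H) :
    ∃ (f₀ : X → Finset A) (g₀ : Y → Finset B), I.IsTotalCover f₀ g₀ ∧ LabelCover.Tight g₀ ∧
      (coverLabels f₀ g₀).card ≤ H.card := by
  obtain ⟨f₀, g₀, hcov₀, htight₀, hH₀⟩ :=
    exists_tight_cover_of_supports (exists_supports hY hcov hH hall)
  exact ⟨f₀, g₀, hcov₀, htight₀,
    Finset.card_le_card_of_injOn PV.u hH₀ fun _ _ _ _ h => PV.u.inj h⟩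

end Extraction

section MinimumRepresentation

variable {X Y A B : Type*} [Fintype X] [Fintype Y] [Fintype A] [Fintype B]
  [DecidableEq X] [DecidableEq Y] [DecidableEq A] [DecidableEq B]
  {I : LabelCover X Y A B} {d t : ℕ} {Υ : Finset (Clause (PV X Y A B))}
  {f : X → Finset A} {g : Y → Finset B}

theorem Implicate.head_mem_headVars {C : Clause (PV X Y A B)} (hC : Implicate (hFun I d t) C)
    (hcl : C.IsClause) {w : PV X Y A B} (hw : C.pos = {w}) : w ∈ headVars I d := by
  obtain ⟨C', hC', hw'⟩ := hC.exists_head isPureHornCNF_phiCNF represents_phiCNF hcl hw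
  exact head_mem_headVars_of_mem_phiCNF hC' hw'

variable (hPH : IsPureHornCNF Υ) (hrep : Represents Υ (hFun I d t))
include hPH hrep

theorem head_mem_headVars {C : Clause (PV X Y A B)} (hC : C ∈ Υ) {w : PV X Y A B}
    (hw : C.pos = {w}) : w ∈ headVars I d :=
  (implicate_of_mem hrep hC).head_mem_headVars (hPH C hC).1 hw

theorem head_notMem_vVars {C : Clause (PV X Y A B)} (hC : C ∈ Υ) {w : PV X Y A B}
    (hw : C.pos = {w}) : w ∉ vVars :=
  headVars_disjoint_vVars.notMem_of_mem_left (head_mem_headVars hPH hrep hC hw)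

theorem exists_head_of_mem_headVars {w : PV X Y A B} (hw : w ∈ headVars I d) :
    ∃ C ∈ Υ, C.pos = {w} ∧ ↑C.neg ⊆ (vVars : Set (PV X Y A B))ᶜ := by
  obtain ⟨C₀, hC₀, hw₀, hwC₀, hC₀v⟩ := exists_psiCNF_head hw
  have hwcl : w ∈ fcClosure Υ ↑C₀.neg :=
    fcClosure_subset_fcClosure_of_implicate hPH hrep (fun _ => implicate_of_mem represents_phiCNF)
      (head_mem_fcClosure (psiCNF_subset_phiCNF (t := t) hC₀) hw₀ subset_fcClosure)
  exact exists_head_of_mem_fcClosure hC₀v (fun _ hC _ hv => head_notMem_vVars hPH hrep hC hv)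
    hwcl hwC₀

theorem u_mem_fcClosure_heads (hcov : I.IsTotalCover f g) {j : ℕ} (hj : j ∈ Finset.Icc 1 t)
    (ℓ : Lab X Y A B) :
    PV.u ℓ ∈ fcClosure (PsiCNF I d) ↑((Υ.filter (PV.v j ∈ ·.neg)).biUnion (·.pos)) := by
  have hheads : ↑((Υ.filter (PV.v j ∈ ·.neg)).biUnion (·.pos)) ⊆
      (vVars : Set (PV X Y A B))ᶜ := by
    intro w hw
    obtain ⟨C, hC, hwC⟩ := Finset.mem_biUnion.mp hw
    obtain ⟨w', hw'⟩ := (hPH C (Finset.mem_filter.mp hC).1).2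
    rw [hw', Finset.mem_singleton] at hwC
    exact head_notMem_vVars hPH hrep (Finset.mem_filter.mp hC).1 (hwC ▸ hw')
  have hΥ : PV.u ℓ ∈ fcClosure Υ {PV.v j} :=
    fcClosure_subset_fcClosure_of_implicate hPH hrep (fun _ => implicate_of_mem represents_phiCNF)
      (headVars_subset_fcClosure_phiCNF hcov hj (u_mem_headVars ℓ))
  rcases fcClosure_singleton_subset _ hΥ with h | h
  · exact absurd h (by simp)
  · exact fcClosure_phiCNF_subset_psiCNF (t := t) hheads
      (fcClosure_subset_fcClosure_of_implicate isPureHornCNF_phiCNF represents_phiCNF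
        (fun _ => implicate_of_mem hrep) h)

theorem card_coverLabels_le_card_filter (hY : ∀ y : Y, ∃ x, (x, y) ∈ I.E)
    (hcov : I.IsTotalCover f g)
    (hopt : ∀ (f₀ : X → Finset A) (g₀ : Y → Finset B), I.IsTotalCover f₀ g₀ →
      LabelCover.Tight g₀ → (coverLabels f g).card ≤ (coverLabels f₀ g₀).card)
    (hd : Fintype.card (Lab X Y A B) < d) {j : ℕ} (hj : j ∈ Finset.Icc 1 t) :
    (coverLabels f g).card ≤ (Υ.filter (PV.v j ∈ ·.neg)).card := by
  refine le_trans ?_ (card_biUnion_pos_le fun C hC => hPH C (Finset.mem_filter.mp hC).1)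
  by_cases hbig : d ≤ ((Υ.filter (PV.v j ∈ ·.neg)).biUnion (·.pos)).card
  · exact (Finset.card_le_univ _).trans (hd.le.trans hbig)
  · obtain ⟨f₀, g₀, hcov₀, htight₀, hcard⟩ := exists_tight_cover_card_le hY hcov
      (not_le.mp hbig) (u_mem_fcClosure_heads hPH hrep hcov hj)
    exact (hopt f₀ g₀ hcov₀ htight₀).trans hcard

/-- From `v j` alone `Φ` already derives every head variable, so any other literal of the body
could be dropped. -/
theorem neg_eq_singleton_of_v_mem (hprime : ∀ C ∈ Υ, PrimeImplicate (hFun I d t) C)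
    (hcov : I.IsTotalCover f g) {j : ℕ} (hj : j ∈ Finset.Icc 1 t) {C : Clause (PV X Y A B)}
    (hC : C ∈ Υ) (hvj : PV.v j ∈ C.neg) : C.neg = {PV.v j} := by
  refine Finset.eq_singleton_iff_unique_mem.mpr ⟨hvj, fun w' hw' => ?_⟩
  by_contra hne
  obtain ⟨w, hw⟩ := (hPH C hC).2
  have hwcl : w ∈ fcClosure (PhiCNF I d t) ↑(C.neg.erase w') :=
    fcClosure_mono (Set.singleton_subset_iff.mpr (Finset.mem_erase.mpr ⟨Ne.symm hne, hvj⟩))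
      (headVars_subset_fcClosure_phiCNF hcov hj (head_mem_headVars hPH hrep hC hw))
  refine (hprime C hC).2.2.2 w' hw' ?_
  rw [hw]
  exact implicate_of_mem_fcClosure represents_phiCNF hwcl

theorem card_headVars_add_mul_le (hY : ∀ y : Y, ∃ x, (x, y) ∈ I.E)
    (hprime : ∀ C ∈ Υ, PrimeImplicate (hFun I d t) C) (hcov : I.IsTotalCover f g)
    (hopt : ∀ (f₀ : X → Finset A) (g₀ : Y → Finset B), I.IsTotalCover f₀ g₀ →
      LabelCover.Tight g₀ → (coverLabels f g).card ≤ (coverLabels f₀ g₀).card)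
    (hd : Fintype.card (Lab X Y A B) < d) :
    (headVars I d).card + t * (coverLabels f g).card ≤ Υ.card := by
  classical
  set Υ₀ := Υ.filter fun C => ↑C.neg ⊆ (vVars : Set (PV X Y A B))ᶜ
  set Υv := fun j => Υ.filter (PV.v j ∈ ·.neg)
  have hΥ₀ : (headVars I d).card ≤ Υ₀.card := by
    refine le_trans (Finset.card_le_card fun w hw => ?_)
      (card_biUnion_pos_le fun C hC => hPH C (Finset.mem_filter.mp hC).1)
    obtain ⟨C, hC, hw, hCv⟩ := exists_head_of_mem_headVars hPH hrep hw
    exact Finset.mem_biUnion.mpr ⟨C, Finset.mem_filter.mpr ⟨hC, hCv⟩, by simp [hw]⟩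
  have hΥv : t * (coverLabels f g).card ≤ ∑ j ∈ Finset.Icc 1 t, (Υv j).card := by
    simpa using Finset.card_nsmul_le_sum _ _ _ fun j hj =>
      card_coverLabels_le_card_filter hPH hrep hY hcov hopt hd hj
  have hdisj : Disjoint Υ₀ ((Finset.Icc 1 t).biUnion Υv) := by
    refine Finset.disjoint_left.mpr fun C hC₀ hCv => ?_
    obtain ⟨j, -, hCj⟩ := Finset.mem_biUnion.mp hCv
    exact (Finset.mem_filter.mp hC₀).2 (Finset.mem_filter.mp hCj).2 ⟨j, rfl⟩
  have hpair : Set.PairwiseDisjoint ↑(Finset.Icc 1 t) Υv := by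
    intro j hj j' _ hjj'
    refine Finset.disjoint_left.mpr fun C hCj hCj' => hjj' ?_
    have h := neg_eq_singleton_of_v_mem hPH hrep hprime hcov hj (Finset.mem_filter.mp hCj).1
      (Finset.mem_filter.mp hCj).2
    exact (by simpa [h] using (Finset.mem_filter.mp hCj').2 : j' = j).symm
  calc (headVars I d).card + t * (coverLabels f g).card
      ≤ Υ₀.card + ((Finset.Icc 1 t).biUnion Υv).card := by
        rw [Finset.card_biUnion hpair]
        omega
    _ = (Υ₀ ∪ (Finset.Icc 1 t).biUnion Υv).card := (Finset.card_union_of_disjoint hdisj).symm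
    _ ≤ Υ.card := Finset.card_le_card (Finset.union_subset (Finset.filter_subset _ _)
        (Finset.biUnion_subset.mpr fun _ _ => Finset.filter_subset _ _))

end MinimumRepresentation

section Counting

variable {X Y A B : Type*} [Fintype X] [Fintype Y] [Fintype A] [Fintype B]
  [DecidableEq X] [DecidableEq Y] [DecidableEq A] [DecidableEq B]
  {I : LabelCover X Y A B} {d : ℕ}

theorem card_headVars : (headVars I d).card =
    Fintype.card (Lab X Y A B) + I.E.card * d + I.E.card * Fintype.card B * d := by
  rw [headVars, Finset.card_union_of_disjoint, Finset.card_union_of_disjoint, bigBody,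
    Finset.card_image_of_injective _ fun _ _ h => PV.u.inj h, Finset.card_image_of_injective,
    Finset.card_image_of_injective]
  · simp
  · rintro ⟨⟨⟨x, y⟩, b⟩, i⟩ ⟨⟨⟨x', y'⟩, b'⟩, i'⟩ h
    simp only [PV.el.injEq] at h
    obtain ⟨rfl, rfl, rfl, rfl⟩ := h
    rfl
  · rintro ⟨⟨x, y⟩, i⟩ ⟨⟨x', y'⟩, i'⟩ h
    simp only [PV.e.injEq] at h
    obtain ⟨rfl, rfl, rfl⟩ := h
    rfl
  all_goals exact Finset.disjoint_left.mpr fun w hw hw' => by cases w <;> simp_all [bigBody]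

theorem card_psiCNF_le : (PsiCNF I d).card ≤
    I.E.card * d * (Fintype.card A * Fintype.card B) + I.E.card * Fintype.card B * d +
      I.E.card * Fintype.card B * d + Fintype.card (Lab X Y A B) := by
  have hA : (clA I d).card ≤ I.E.card * d * (Fintype.card A * Fintype.card B) := by
    refine Finset.card_biUnion_le.trans ?_
    calc _ ≤ ∑ _p ∈ I.E ×ˢ Finset.Icc 1 d, Fintype.card A * Fintype.card B :=
          Finset.sum_le_sum fun _ _ => Finset.card_image_le.trans
            ((Finset.card_le_univ _).trans_eq (Fintype.card_prod _ _))
      _ = _ := by simp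
  have hB : (clB I d).card ≤ I.E.card * Fintype.card B * d :=
    Finset.card_image_le.trans_eq (by simp)
  have hC : (clC I d).card ≤ I.E.card * Fintype.card B * d :=
    Finset.card_image_le.trans_eq (by simp)
  have hD : (clD I d).card ≤ Fintype.card (Lab X Y A B) :=
    Finset.card_image_le.trans_eq Finset.card_univ
  refine (Finset.card_union_le _ _).trans ?_
  have := Finset.card_union_le (clA I d ∪ clB I d) (clC I d)
  have := Finset.card_union_le (clA I d) (clB I d)
  omega

theorem card_psiCNF_le_mul_card_headVars : (PsiCNF I d).card ≤
    (Fintype.card A + Fintype.card B) * (headVars I d).card := by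
  refine card_psiCNF_le.trans ?_
  rw [card_headVars, Fintype.card_sum, Fintype.card_prod, Fintype.card_prod]
  generalize Fintype.card A = a, Fintype.card B = b, Fintype.card X = r, Fintype.card Y = s,
    I.E.card = n
  have ha := Nat.le_mul_self a
  have hb := Nat.le_mul_self b
  nlinarith [Nat.mul_le_mul_left r ha, Nat.mul_le_mul_left s hb, Nat.mul_le_mul_left (n * d) hb,
    Nat.zero_le (b * r * a), Nat.zero_le (a * s * b), Nat.zero_le (a * n * d)]

end Counting

theorem lcCost_mul_card {X A : Type*} [Fintype X] (f : X → Finset A) :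
    lcCost f * Fintype.card X = ∑ x, ((f x).card : ℚ) := by
  rcases isEmpty_or_nonempty X with hX | hX
  · simp
  · exact div_mul_cancel₀ _ (by positivity)

theorem card_coverLabels_le_of_lcCost_le {X Y A B : Type*} [Fintype X] [Fintype Y]
    [Fintype A] [Fintype B] [DecidableEq A] [DecidableEq B] {f f₀ : X → Finset A}
    {g g₀ : Y → Finset B} (hg : LabelCover.Tight g) (hg₀ : LabelCover.Tight g₀)
    (h : lcCost f ≤ lcCost f₀) : (coverLabels f g).card ≤ (coverLabels f₀ g₀).card := by
  rw [card_coverLabels_of_tight hg, card_coverLabels_of_tight hg₀, Nat.add_le_add_iff_right]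
  exact_mod_cast (lcCost_mul_card f).symm.trans_le
    ((mul_le_mul_of_nonneg_right h (Nat.cast_nonneg _)).trans_eq (lcCost_mul_card f₀))

theorem min_rep_size_bounds_general
    {X Y A B : Type*} [Fintype X] [Fintype Y] [Fintype A] [Fintype B]
    [DecidableEq X] [DecidableEq Y] [DecidableEq A] [DecidableEq B]
    (I : LabelCover X Y A B) (d t : ℕ)
    (hd : d = 1 + Fintype.card X * Fintype.card A + Fintype.card Y * Fintype.card B)
    (hnoIsoY : ∀ y : Y, ∃ x, (x, y) ∈ I.E)
    (Υ : Finset (Clause (PV X Y A B)))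
    (hPH : IsPureHornCNF Υ)
    (hprime : ∀ C ∈ Υ, PrimeImplicate (hFun I d t) C)
    (hrep : Represents Υ (hFun I d t))
    (hmin : ∀ Υ' : Finset (Clause (PV X Y A B)), IsPureHornCNF Υ' →
      Represents Υ' (hFun I d t) → Υ.card ≤ Υ'.card)
    (f : X → Finset A) (g : Y → Finset B)
    (hcov : I.IsTotalCover f g) (htight : LabelCover.Tight g)
    (hopt : ∀ (f' : X → Finset A) (g' : Y → Finset B),
      I.IsTotalCover f' g' → lcCost f ≤ lcCost f') :
    ((PsiCNF I d).card : ℚ) / ((Fintype.card A : ℚ) + (Fintype.card B : ℚ)) ≤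
      (Υ.card : ℚ) -
        (t : ℚ) * (lcCost f * (Fintype.card X : ℚ) + (Fintype.card Y : ℚ)) ∧
    (Υ.card : ℚ) -
        (t : ℚ) * (lcCost f * (Fintype.card X : ℚ) + (Fintype.card Y : ℚ)) ≤
      ((PsiCNF I d).card : ℚ) := by
  have hLab : Fintype.card (Lab X Y A B) < d := by
    simp only [Fintype.card_sum, Fintype.card_prod]
    omega
  have hupper : (Υ.card : ℚ) ≤ (PsiCNF I d).card + t * (coverLabels f g).card := by
    exact_mod_cast (hmin _ (fun C hC => isPureHornCNF_phiCNF C (coverCNF_subset_phiCNF hC))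
      (represents_coverCNF hcov)).trans card_coverCNF_le
  have hlower : ((headVars I d).card : ℚ) + t * (coverLabels f g).card ≤ Υ.card := by
    exact_mod_cast card_headVars_add_mul_le hPH hrep hnoIsoY hprime hcov
      (fun f₀ g₀ hcov₀ htight₀ => card_coverLabels_le_of_lcCost_le htight htight₀
        (hopt f₀ g₀ hcov₀)) hLab
  have hpsi : ((PsiCNF I d).card : ℚ) ≤
      (Fintype.card A + Fintype.card B) * ((headVars I d).card : ℚ) := by
    exact_mod_cast card_psiCNF_le_mul_card_headVars
  have hlabels : lcCost f * Fintype.card X + Fintype.card Y = ((coverLabels f g).card : ℚ) := by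
    rw [lcCost_mul_card, card_coverLabels_of_tight htight]
    push_cast
    rfl
  rw [hlabels]
  refine ⟨div_le_of_le_mul₀ (by positivity) (by linarith) ?_, by linarith⟩
  calc ((PsiCNF I d).card : ℚ) ≤ (Fintype.card A + Fintype.card B) * (headVars I d).card := hpsi
    _ ≤ (Fintype.card A + Fintype.card B) * (Υ.card - t * (coverLabels f g).card) :=
        mul_le_mul_of_nonneg_left (by linarith) (by positivity)
    _ = _ := mul_comm _ _

/-- With `d = 1 + rλ + sλ′`, if `Υ` is a clause minimum prime pure
Horn CNF representation of the canonical function `h` and `(f, g)` is any tight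
optimal total-cover of the (refined) Label Cover instance, then
`|Ψ|_c/(λ+λ′) ≤ |Υ|_c − t(κ(f)·r + s) ≤ |Ψ|_c`, where `κ(f)·r + s` is the total
number of labels assigned by the total-cover. -/
theorem min_rep_size_bounds
    {X Y A B : Type*} [Fintype X] [Fintype Y] [Fintype A] [Fintype B]
    [DecidableEq X] [DecidableEq Y] [DecidableEq A] [DecidableEq B]
    [Nonempty X] [Nonempty Y]
    (I : LabelCover X Y A B) (d t : ℕ) (ht : 1 ≤ t)
    (hd : d = 1 + Fintype.card X * Fintype.card A + Fintype.card Y * Fintype.card B)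
    (hnoIsoX : ∀ x : X, ∃ y, (x, y) ∈ I.E)
    (hnoIsoY : ∀ y : Y, ∃ x, (x, y) ∈ I.E)
    (Υ : Finset (Clause (PV X Y A B)))
    (hPH : IsPureHornCNF Υ)
    (hprime : ∀ C ∈ Υ, PrimeImplicate (hFun I d t) C)
    (hrep : Represents Υ (hFun I d t))
    (hmin : ∀ Υ' : Finset (Clause (PV X Y A B)), IsPureHornCNF Υ' →
      Represents Υ' (hFun I d t) → Υ.card ≤ Υ'.card)
    (f : X → Finset A) (g : Y → Finset B)
    (hcov : I.IsTotalCover f g) (htight : LabelCover.Tight g)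
    (hopt : ∀ (f' : X → Finset A) (g' : Y → Finset B),
      I.IsTotalCover f' g' → lcCost f ≤ lcCost f') :
    ((PsiCNF I d).card : ℚ) / ((Fintype.card A : ℚ) + (Fintype.card B : ℚ)) ≤
      (Υ.card : ℚ) -
        (t : ℚ) * (lcCost f * (Fintype.card X : ℚ) + (Fintype.card Y : ℚ)) ∧
    (Υ.card : ℚ) -
        (t : ℚ) * (lcCost f * (Fintype.card X : ℚ) + (Fintype.card Y : ℚ)) ≤
      ((PsiCNF I d).card : ℚ) :=
  min_rep_size_bounds_general I d t hd hnoIsoY Υ hPH hprime hrep hmin f g hcov htight hopt
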